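/- Let A be a nonnegative weakly irreducible tensor of order m and dimension n with slice sums ordered K_1 <= K_2 <= ... <= K_n, and let g be the girth (minimum circuit length) of the digraph G_A. Then (K_1 K_2 ... K_g)^{1/g} <= rho(A) <= (K_{n-g+1} K_{n-g+2} ... K_n)^{1/g}. -/

import Mathlib

open scoped BigOperators
open Finset

/-- The arc relation of the digraph `G_A` of an order-`m` dimension-`n` tensor `A`,
    whose entries are indexed by a head index and a tail of `m - 1` indices:
    `(i, j)` is an arc when some entry `a_{i i_2 ... i_m} ≠ 0` has `j` among `i_2, ..., i_m`. -/
def tArc (m n : ℕ) (A : Fin n → (Fin (m - 1) → Fin n) → ℝ) (i j : Fin n) : Prop :=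
  ∃ t : Fin (m - 1) → Fin n, A i t ≠ 0 ∧ j ∈ Set.range t

/-- A digraph (given by its arc relation) is strongly connected. -/
def StronglyConnected {n : ℕ} (arc : Fin n → Fin n → Prop) : Prop :=
  ∀ i j : Fin n, Relation.ReflTransGen arc i j

/-- `γ 0, γ 1, ..., γ p = γ 0` is a circuit (closed directed walk, loops allowed)
    of length `p` in the digraph with arc relation `arc`. -/
def IsCircuit {n : ℕ} (arc : Fin n → Fin n → Prop) (p : ℕ) (γ : ℕ → Fin n) : Prop :=
  0 < p ∧ γ p = γ 0 ∧ ∀ j < p, arc (γ j) (γ (j + 1))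

/-- `lam` is an eigenvalue of the order-`m` dimension-`n` real tensor `A`:
    there is a nonzero complex vector `x` with `A x^{m-1} = lam x^{[m-1]}`. -/
def IsEig (m n : ℕ) (A : Fin n → (Fin (m - 1) → Fin n) → ℝ) (lam : ℂ) : Prop :=
  ∃ x : Fin n → ℂ, x ≠ 0 ∧ ∀ i : Fin n,
    ∑ t : Fin (m - 1) → Fin n, (A i t : ℂ) * ∏ j, x (t j) = lam * x i ^ (m - 1)

/-- The spectral radius of a tensor: the supremum of moduli of its eigenvalues. -/
noncomputable def specRad (m n : ℕ) (A : Fin n → (Fin (m - 1) → Fin n) → ℝ) : ℝ :=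
  sSup {r : ℝ | ∃ lam : ℂ, IsEig m n A lam ∧ ‖lam‖ = r}

/-- The `i`-th slice sum `K_i = ∑_{i_2,...,i_m} a_{i i_2 ... i_m}`. -/
def sliceSum (m n : ℕ) (A : Fin n → (Fin (m - 1) → Fin n) → ℝ) (i : Fin n) : ℝ :=
  ∑ t : Fin (m - 1) → Fin n, A i t

/-- `(A x^{m-1})_i = ∑_{i_2,...,i_m} a_{i i_2 ... i_m} x_{i_2} ⋯ x_{i_m}`. -/
def Ax (m n : ℕ) (A : Fin n → (Fin (m - 1) → Fin n) → ℝ) (x : Fin n → ℝ) (i : Fin n) : ℝ :=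
  ∑ t : Fin (m - 1) → Fin n, A i t * ∏ j, x (t j)


/-!
Upper bound: if `A x^{m-1} = λ x^{[m-1]}` then `y = |x|` satisfies `|λ| y^{[m-1]} ≤ A y^{m-1}`.
Sending each vertex `i` along an arc to a neighbour `σ i` of largest `y` gives
`|λ| y_i^{m-1} ≤ K_i y_{σ i}^{m-1}`. The orbit under `σ` of a vertex with `y > 0` ends in a cycle,
which is a circuit of `G_A` on `q ≥ g` distinct vertices; around it the weights `y^{m-1}`
telescope, so `|λ|^q` is at most the product of `K` over those vertices, hence at most the
product of the `q` largest `K_i`, whose geometric mean is at most that of the `g` largest.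

Lower bound: the same argument with neighbours of smallest weight, applied to a positive
eigenvector of the positive tensor `A + ε`. That eigenvector maximises the Collatz–Wielandt value
over the simplex; letting `ε → 0` along a convergent subsequence gives an eigenpair `(r, x)` of `A`
with `x ≥ 0` and `r^g ≥ K_1 ⋯ K_g`.
-/

namespace Finset

variable {ι R : Type*}

section OrderedSemiring
variable [CommSemiring R] [PartialOrder R] [IsOrderedRing R] {s t u : Finset ι} {f : ι → R}

theorem prod_pow_card_le_prod_pow_card (h0 : ∀ i ∈ s, 0 ≤ f i)
    (h : ∀ i ∈ s, ∀ j ∈ t, f i ≤ f j) : (∏ i ∈ s, f i) ^ #t ≤ (∏ j ∈ t, f j) ^ #s := by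
  calc (∏ i ∈ s, f i) ^ #t = ∏ i ∈ s, ∏ _j ∈ t, f i := by
        rw [← prod_pow]; simp only [prod_const]
    _ ≤ ∏ _i ∈ s, ∏ j ∈ t, f j :=
        prod_le_prod (fun i hi => prod_nonneg fun _ _ => h0 i hi)
          fun i hi => prod_le_prod (fun _ _ => h0 i hi) fun j hj => h i hi j hj
    _ = (∏ j ∈ t, f j) ^ #s := prod_const _

theorem prod_pow_card_le_of_subset [DecidableEq ι] (hsu : s ⊆ u) (h0 : ∀ i ∈ s, 0 ≤ f i)
    (h : ∀ i ∈ s, ∀ j ∈ u \ s, f i ≤ f j) : (∏ i ∈ s, f i) ^ #u ≤ (∏ i ∈ u, f i) ^ #s := by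
  rw [← prod_sdiff hsu, ← card_sdiff_add_card_eq_card hsu, pow_add, mul_pow]
  exact mul_le_mul_of_nonneg_right (prod_pow_card_le_prod_pow_card h0 h)
    (pow_nonneg (prod_nonneg h0) _)

theorem prod_pow_card_le_of_subset' [DecidableEq ι] (hsu : s ⊆ u) (h0 : ∀ i ∈ u, 0 ≤ f i)
    (h : ∀ i ∈ u \ s, ∀ j ∈ s, f i ≤ f j) : (∏ i ∈ u, f i) ^ #s ≤ (∏ i ∈ s, f i) ^ #u := by
  rw [← prod_sdiff hsu, ← card_sdiff_add_card_eq_card hsu, pow_add, mul_pow]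
  exact mul_le_mul_of_nonneg_right
    (prod_pow_card_le_prod_pow_card (fun i hi => h0 i (sdiff_subset hi)) h)
    (pow_nonneg (prod_nonneg fun i hi => h0 i (hsu hi)) _)

end OrderedSemiring

theorem prod_le_prod_of_card_eq [DecidableEq ι] [CommSemiring R] [LinearOrder R]
    [IsStrictOrderedRing R] {s t : Finset ι} {f : ι → R} (hst : #s = #t) (h0 : ∀ i ∈ s, 0 ≤ f i)
    (h : ∀ i ∈ s \ t, ∀ j ∈ t \ s, f i ≤ f j) : ∏ i ∈ s, f i ≤ ∏ j ∈ t, f j := by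
  have hcard : #(s \ t) = #(t \ s) := card_sdiff_comm hst
  have h0' : ∀ i ∈ s \ t, 0 ≤ f i := fun i hi => h0 i (sdiff_subset hi)
  have hdiff : ∏ i ∈ s \ t, f i ≤ ∏ j ∈ t \ s, f j := by
    rcases (s \ t).eq_empty_or_nonempty with hst' | ⟨i, hi⟩
    · rw [hst', card_empty, eq_comm, card_eq_zero] at hcard
      simp [hcard, hst']
    have h0'' : ∀ j ∈ t \ s, 0 ≤ f j := fun j hj => (h0' i hi).trans (h i hi j hj)
    have := prod_pow_card_le_prod_pow_card h0' h
    rw [hcard] at this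
    exact (pow_le_pow_iff_left₀ (prod_nonneg h0') (prod_nonneg h0'')
      (hcard ▸ card_ne_zero.2 ⟨i, hi⟩)).1 this
  rw [← prod_inter_mul_prod_sdiff s t, ← prod_inter_mul_prod_sdiff t s, inter_comm]
  exact mul_le_mul_of_nonneg_left hdiff (prod_nonneg fun i hi => h0 i (mem_of_mem_inter_right hi))

theorem prod_range_le_prod_range_of_mul_le_mul_succ [CommRing R] [LinearOrder R]
    [IsStrictOrderedRing R] {a b w : ℕ → R} {q : ℕ} (ha : ∀ k, 0 ≤ a k)
    (hw : ∀ k, 0 < w k) (hq : w q = w 0) (h : ∀ k, a k * w k ≤ b k * w (k + 1)) :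
    ∏ k ∈ range q, a k ≤ ∏ k ∈ range q, b k := by
  have hrot : ∏ k ∈ range q, w (k + 1) = ∏ k ∈ range q, w k := by
    refine mul_right_cancel₀ (hw 0).ne' ?_
    rw [← prod_range_succ', prod_range_succ, hq]
  have hmul : ∏ k ∈ range q, (a k * w k) ≤ ∏ k ∈ range q, (b k * w (k + 1)) :=
    prod_le_prod (fun k _ => mul_nonneg (ha k) (hw k).le) fun k _ => h k
  rw [prod_mul_distrib, prod_mul_distrib, hrot] at hmul
  exact le_of_mul_le_mul_right hmul (prod_pos fun k _ => hw k)

end Finset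

namespace Fin

variable {n : ℕ}

theorem card_filter_sub_le_val {q : ℕ} : #{i : Fin n | n - q ≤ (i : ℕ)} = min n q := by
  have h := card_filter_val_lt (n := n) (m := n - q)
  have := card_filter_add_card_filter_not (s := (univ : Finset (Fin n)))
    (fun i : Fin n => (i : ℕ) < n - q)
  simp only [not_lt, card_univ, Fintype.card_fin] at this
  omega

variable {R : Type*} [CommSemiring R] [LinearOrder R] [IsStrictOrderedRing R]
  {K : Fin n → R}

theorem prod_filter_val_lt_card_le_prod (hK : Monotone K) (h0 : ∀ i, 0 ≤ K i)
    (S : Finset (Fin n)) :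
    ∏ i ∈ univ.filter (fun i : Fin n => (i : ℕ) < #S), K i ≤ ∏ i ∈ S, K i := by
  refine prod_le_prod_of_card_eq ?_ (fun i _ => h0 i) fun i hi j hj => hK ?_
  · rw [card_filter_val_lt, min_eq_right (card_le_univ S |>.trans_eq (Fintype.card_fin n))]
  · simp only [mem_sdiff, mem_filter, mem_univ, true_and] at hi hj
    exact Fin.le_def.2 (by omega)

theorem prod_le_prod_filter_sub_card_le_val (hK : Monotone K) (h0 : ∀ i, 0 ≤ K i)
    (S : Finset (Fin n)) :
    ∏ i ∈ S, K i ≤ ∏ i ∈ univ.filter (fun i : Fin n => n - #S ≤ (i : ℕ)), K i := by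
  refine prod_le_prod_of_card_eq ?_ (fun i _ => h0 i) fun i hi j hj => hK ?_
  · rw [card_filter_sub_le_val, min_eq_right (card_le_univ S |>.trans_eq (Fintype.card_fin n))]
  · simp only [mem_sdiff, mem_filter, mem_univ, true_and] at hi hj
    exact Fin.le_def.2 (by omega)

theorem prod_filter_val_lt_le_pow (hK : Monotone K) (h0 : ∀ i, 0 ≤ K i) {S : Finset (Fin n)}
    {g : ℕ} (hg : g ≤ #S) {r : R} (hr : 0 ≤ r) (h : ∏ i ∈ S, K i ≤ r ^ #S) :
    ∏ i ∈ univ.filter (fun i : Fin n => (i : ℕ) < g), K i ≤ r ^ g := by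
  have hSn : #S ≤ n := card_le_univ S |>.trans_eq (Fintype.card_fin n)
  set L : ℕ → Finset (Fin n) := fun q => univ.filter (fun i : Fin n => (i : ℕ) < q)
  have hL : ∀ q ≤ n, #(L q) = q := fun q hq => by
    simp only [L, card_filter_val_lt, min_eq_right hq]
  rcases (Nat.eq_zero_or_pos #S) with hS | hS
  · obtain rfl : g = 0 := by omega
    simp
  have hmean : (∏ i ∈ L g, K i) ^ #S ≤ (∏ i ∈ L #S, K i) ^ g := by
    have := prod_pow_card_le_of_subset (f := K) (s := L g) (u := L #S)
      (fun i hi => by simp only [L, mem_filter, mem_univ, true_and] at hi ⊢; omega)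
      (fun i _ => h0 i) fun i hi j hj => hK ?_
    · rwa [hL g (hg.trans hSn), hL #S hSn] at this
    · simp only [L, mem_sdiff, mem_filter, mem_univ, true_and] at hi hj
      exact Fin.le_def.2 (by omega)
  refine (pow_le_pow_iff_left₀ (prod_nonneg fun i _ => h0 i) (pow_nonneg hr g) hS.ne').1 ?_
  calc (∏ i ∈ L g, K i) ^ #S ≤ (∏ i ∈ L #S, K i) ^ g := hmean
    _ ≤ (∏ i ∈ S, K i) ^ g :=
        pow_le_pow_left₀ (prod_nonneg fun i _ => h0 i) (prod_filter_val_lt_card_le_prod hK h0 S) g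
    _ ≤ (r ^ #S) ^ g := pow_le_pow_left₀ (prod_nonneg fun i _ => h0 i) h g
    _ = (r ^ g) ^ #S := by rw [← pow_mul, ← pow_mul, mul_comm]

theorem pow_le_prod_filter_sub_le_val (hK : Monotone K) (h0 : ∀ i, 0 ≤ K i)
    {S : Finset (Fin n)} {g : ℕ} (hg : g ≤ #S) {r : R} (hr : 0 ≤ r) (h : r ^ #S ≤ ∏ i ∈ S, K i) :
    r ^ g ≤ ∏ i ∈ univ.filter (fun i : Fin n => n - g ≤ (i : ℕ)), K i := by
  have hSn : #S ≤ n := card_le_univ S |>.trans_eq (Fintype.card_fin n)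
  set T : ℕ → Finset (Fin n) := fun q => univ.filter (fun i : Fin n => n - q ≤ (i : ℕ))
  have hT : ∀ q ≤ n, #(T q) = q := fun q hq => by
    simp only [T, card_filter_sub_le_val, min_eq_right hq]
  rcases (Nat.eq_zero_or_pos #S) with hS | hS
  · obtain rfl : g = 0 := by omega
    simp [filter_false_of_mem fun (i : Fin n) _ => not_le.2 i.is_lt]
  have hmean : (∏ i ∈ T #S, K i) ^ g ≤ (∏ i ∈ T g, K i) ^ #S := by
    have := prod_pow_card_le_of_subset' (f := K) (s := T g) (u := T #S)
      (fun i hi => by simp only [T, mem_filter, mem_univ, true_and] at hi ⊢; omega)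
      (fun i _ => h0 i) fun i hi j hj => hK ?_
    · rwa [hT g (hg.trans hSn), hT #S hSn] at this
    · simp only [T, mem_sdiff, mem_filter, mem_univ, true_and] at hi hj
      exact Fin.le_def.2 (by omega)
  refine (pow_le_pow_iff_left₀ (pow_nonneg hr g) (prod_nonneg fun i _ => h0 i) hS.ne').1 ?_
  calc (r ^ g) ^ #S = (r ^ #S) ^ g := by rw [← pow_mul, ← pow_mul, mul_comm]
    _ ≤ (∏ i ∈ S, K i) ^ g := pow_le_pow_left₀ (pow_nonneg hr _) h g
    _ ≤ (∏ i ∈ T #S, K i) ^ g :=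
        pow_le_pow_left₀ (prod_nonneg fun i _ => h0 i)
          (prod_le_prod_filter_sub_card_le_val hK h0 S) g
    _ ≤ (∏ i ∈ T g, K i) ^ #S := hmean

end Fin

theorem Function.exists_iterate_mem_periodicPts {α : Type*} [Finite α] (f : α → α) (x : α) :
    ∃ s, f^[s] x ∈ Function.periodicPts f := by
  obtain ⟨a, b, hab, h⟩ := Finite.exists_ne_map_eq_of_infinite (fun k : ℕ => f^[k] x)
  wlog hlt : a < b generalizing a b
  · exact this b a hab.symm h.symm (by omega)
  refine ⟨a, Function.mk_mem_periodicPts (n := b - a) (by omega) ?_⟩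
  rw [Function.IsPeriodicPt, Function.IsFixedPt, ← Function.iterate_add_apply,
    Nat.sub_add_cancel hlt.le]
  exact h.symm

theorem exists_circuit_prod_le {n : ℕ} {arc : Fin n → Fin n → Prop} {σ : Fin n → Fin n}
    (hσ : ∀ i, arc i (σ i)) {R : Type*} [CommRing R] [LinearOrder R] [IsStrictOrderedRing R]
    {a b w : Fin n → R} (ha : ∀ i, 0 ≤ a i) {i₀ : Fin n} (hw : ∀ k, 0 < w (σ^[k] i₀))
    (hrel : ∀ i, a i * w i ≤ b i * w (σ i)) :
    ∃ S : Finset (Fin n), (∃ γ, IsCircuit arc #S γ) ∧ ∏ i ∈ S, a i ≤ ∏ i ∈ S, b i := by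
  obtain ⟨s, hs⟩ := Function.exists_iterate_mem_periodicPts σ i₀
  set z := σ^[s] i₀
  set q := Function.minimalPeriod σ z
  have hinj : Set.InjOn (σ^[·] z) (range q) := by
    rw [coe_range]; exact Function.iterate_injOn_Iio_minimalPeriod
  have hcard : #((range q).image (σ^[·] z)) = q := by rw [card_image_of_injOn hinj, card_range]
  refine ⟨(range q).image (σ^[·] z), ⟨(σ^[·] z), ?_⟩, ?_⟩
  · rw [hcard]
    refine ⟨Function.minimalPeriod_pos_of_mem_periodicPts hs, Function.iterate_minimalPeriod,
      fun k _ => ?_⟩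
    simp only [Function.iterate_succ_apply']
    exact hσ _
  · rw [prod_image hinj, prod_image hinj]
    refine prod_range_le_prod_range_of_mul_le_mul_succ (w := fun k => w (σ^[k] z))
      (fun k => ha _) (fun k => ?_) (congrArg w Function.iterate_minimalPeriod) fun k => ?_
    · rw [← Function.iterate_add_apply]; exact hw _
    · simp only [Function.iterate_succ_apply']; exact hrel _

section Digraph

variable {n : ℕ} {arc : Fin n → Fin n → Prop}

theorem exists_out_arc (hirr : StronglyConnected arc) {p : ℕ} {γ : ℕ → Fin n}
    (hγ : IsCircuit arc p γ) (i : Fin n) : ∃ j, arc i j := by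
  rcases (hirr i (γ 0)).cases_head with rfl | ⟨j, hij, -⟩
  · exact ⟨γ 1, hγ.2.2 0 hγ.1⟩
  · exact ⟨j, hij⟩

theorem exists_arc_max (h : ∀ i, ∃ j, arc i j) {β : Type*} [LinearOrder β] (y : Fin n → β)
    (i : Fin n) : ∃ s, arc i s ∧ ∀ j, arc i j → y j ≤ y s := by
  classical
  obtain ⟨j₀, hj₀⟩ := h i
  obtain ⟨s, hs, hmax⟩ := exists_max_image (univ.filter (arc i)) y ⟨j₀, by simpa using hj₀⟩
  exact ⟨s, by simpa using hs, fun j hj => hmax j (by simpa using hj)⟩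

theorem exists_arc_min (h : ∀ i, ∃ j, arc i j) {β : Type*} [LinearOrder β] (y : Fin n → β)
    (i : Fin n) : ∃ s, arc i s ∧ ∀ j, arc i j → y s ≤ y j :=
  exists_arc_max h (β := βᵒᵈ) y i

end Digraph

section Tensor

variable {m n : ℕ} {A : Fin n → (Fin (m - 1) → Fin n) → ℝ}

theorem two_le_of_tArc {i j : Fin n} (h : tArc m n A i j) : 2 ≤ m := by
  obtain ⟨t, -, k, -⟩ := h
  have := k.pos
  omega

theorem sliceSum_nonneg (hA : ∀ i t, 0 ≤ A i t) (i : Fin n) : 0 ≤ sliceSum m n A i :=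
  sum_nonneg fun t _ => hA i t

theorem Ax_nonneg (hA : ∀ i t, 0 ≤ A i t) {x : Fin n → ℝ} (hx : ∀ i, 0 ≤ x i) (i : Fin n) :
    0 ≤ Ax m n A x i :=
  sum_nonneg fun t _ => mul_nonneg (hA i t) (prod_nonneg fun _ _ => hx _)

theorem Ax_pos {B : Fin n → (Fin (m - 1) → Fin n) → ℝ} (hB : ∀ i t, 0 < B i t)
    {x : Fin n → ℝ} (hx : ∀ i, 0 ≤ x i) {j : Fin n} (hj : 0 < x j) (i : Fin n) :
    0 < Ax m n B x i :=
  sum_pos' (fun t _ => mul_nonneg (hB i t).le (prod_nonneg fun _ _ => hx _))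
    ⟨fun _ => j, mem_univ _, mul_pos (hB i _) (prod_pos fun _ _ => hj)⟩

theorem Ax_le_sliceSum_mul_pow (hA : ∀ i t, 0 ≤ A i t) {x : Fin n → ℝ} (hx : ∀ i, 0 ≤ x i)
    {i : Fin n} {c : ℝ} (hc : ∀ j, tArc m n A i j → x j ≤ c) :
    Ax m n A x i ≤ sliceSum m n A i * c ^ (m - 1) := by
  rw [sliceSum, sum_mul]
  refine sum_le_sum fun t _ => ?_
  rcases (hA i t).eq_or_lt with h0 | h0
  · simp [← h0]
  refine mul_le_mul_of_nonneg_left ?_ (hA i t)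
  calc ∏ j, x (t j) ≤ ∏ _j : Fin (m - 1), c :=
        prod_le_prod (fun _ _ => hx _) fun j _ => hc _ ⟨t, h0.ne', j, rfl⟩
    _ = c ^ (m - 1) := by simp

theorem sliceSum_mul_pow_le_Ax (hA : ∀ i t, 0 ≤ A i t) {x : Fin n → ℝ} {i : Fin n} {c : ℝ}
    (hc0 : 0 ≤ c) (hc : ∀ j, tArc m n A i j → c ≤ x j) :
    sliceSum m n A i * c ^ (m - 1) ≤ Ax m n A x i := by
  rw [sliceSum, sum_mul]
  refine sum_le_sum fun t _ => ?_
  rcases (hA i t).eq_or_lt with h0 | h0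
  · simp [← h0]
  refine mul_le_mul_of_nonneg_left ?_ (hA i t)
  calc c ^ (m - 1) = ∏ _j : Fin (m - 1), c := by simp
    _ ≤ ∏ j, x (t j) := prod_le_prod (fun _ _ => hc0) fun j _ => hc _ ⟨t, h0.ne', j, rfl⟩

theorem Ax_mono_left {B : Fin n → (Fin (m - 1) → Fin n) → ℝ} (hAB : ∀ i t, A i t ≤ B i t)
    {x : Fin n → ℝ} (hx : ∀ i, 0 ≤ x i) (i : Fin n) : Ax m n A x i ≤ Ax m n B x i :=
  sum_le_sum fun t _ => mul_le_mul_of_nonneg_right (hAB i t) (prod_nonneg fun _ _ => hx _)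

theorem Ax_mono (hA : ∀ i t, 0 ≤ A i t) {x y : Fin n → ℝ} (hx : ∀ i, 0 ≤ x i)
    (hxy : ∀ i, x i ≤ y i) (i : Fin n) : Ax m n A x i ≤ Ax m n A y i :=
  sum_le_sum fun t _ => mul_le_mul_of_nonneg_left
    (prod_le_prod (fun _ _ => hx _) fun _ _ => hxy _) (hA i t)

theorem mul_sub_le_Ax_sub_Ax (hA : ∀ i t, 0 ≤ A i t) {x y : Fin n → ℝ} (hx : ∀ i, 0 ≤ x i)
    (hxy : ∀ i, x i ≤ y i) (i : Fin n) (t : Fin (m - 1) → Fin n) :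
    A i t * (∏ j, y (t j) - ∏ j, x (t j)) ≤ Ax m n A y i - Ax m n A x i := by
  rw [Ax, Ax, ← sum_sub_distrib]
  simp_rw [← mul_sub]
  exact single_le_sum (f := fun t => A i t * (∏ j, y (t j) - ∏ j, x (t j)))
    (fun t _ => mul_nonneg (hA i t)
      (sub_nonneg.2 (prod_le_prod (fun _ _ => hx _) fun _ _ => hxy _))) (mem_univ t)

theorem Ax_smul (c : ℝ) (x : Fin n → ℝ) (i : Fin n) :
    Ax m n A (c • x) i = c ^ (m - 1) * Ax m n A x i := by
  simp only [Ax, mul_sum, Pi.smul_apply, smul_eq_mul, prod_mul_distrib, prod_const, card_univ,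
    Fintype.card_fin]
  exact sum_congr rfl fun t _ => by ring

theorem continuous_Ax (A : Fin n → (Fin (m - 1) → Fin n) → ℝ) (i : Fin n) :
    Continuous fun x : Fin n → ℝ => Ax m n A x i := by
  unfold Ax; fun_prop

end Tensor

section Bounds

variable {m n : ℕ} {A : Fin n → (Fin (m - 1) → Fin n) → ℝ} {g : ℕ}

theorem pow_le_prod_top_of_mul_pow_le_Ax (hA : ∀ i t, 0 ≤ A i t)
    (hirr : StronglyConnected (tArc m n A)) (hmono : Monotone (sliceSum m n A))
    (hg : IsLeast {p : ℕ | ∃ γ : ℕ → Fin n, IsCircuit (tArc m n A) p γ} g)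
    {y : Fin n → ℝ} (hy : ∀ i, 0 ≤ y i) {i₀ : Fin n} (hy₀ : 0 < y i₀) {r : ℝ} (hr : 0 ≤ r)
    (hsub : ∀ i, r * y i ^ (m - 1) ≤ Ax m n A y i) :
    r ^ g ≤ ∏ i ∈ univ.filter (fun i : Fin n => n - g ≤ (i : ℕ)), sliceSum m n A i := by
  obtain ⟨γ, hγ⟩ := hg.1
  have hK0 := sliceSum_nonneg hA
  rcases hr.eq_or_lt with rfl | hr
  · rw [zero_pow hγ.1.ne']
    exact prod_nonneg fun i _ => hK0 i
  choose σ hσ hσmax using exists_arc_max (exists_out_arc hirr hγ) y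
  have hrel : ∀ i, r * y i ^ (m - 1) ≤ sliceSum m n A i * y (σ i) ^ (m - 1) :=
    fun i => (hsub i).trans (Ax_le_sliceSum_mul_pow hA hy (hσmax i))
  have hw : ∀ k, 0 < y (σ^[k] i₀) ^ (m - 1) := by
    intro k
    induction k with
    | zero => exact pow_pos hy₀ _
    | succ k ih =>
      rw [Function.iterate_succ_apply']
      exact pos_of_mul_pos_right ((mul_pos hr ih).trans_le (hrel _)) (hK0 _)
  obtain ⟨S, ⟨γ', hγ'⟩, hS⟩ := exists_circuit_prod_le hσ (fun _ => hr.le) hw hrel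
  rw [prod_const] at hS
  exact Fin.pow_le_prod_filter_sub_le_val hmono hK0 (hg.2 ⟨γ', hγ'⟩) hr.le hS

theorem prod_bot_le_pow_of_Ax_le_mul_pow (hA : ∀ i t, 0 ≤ A i t)
    (hirr : StronglyConnected (tArc m n A)) (hmono : Monotone (sliceSum m n A))
    (hg : IsLeast {p : ℕ | ∃ γ : ℕ → Fin n, IsCircuit (tArc m n A) p γ} g)
    {x : Fin n → ℝ} (hx : ∀ i, 0 < x i) {r : ℝ} (hr : 0 ≤ r)
    (hsuper : ∀ i, Ax m n A x i ≤ r * x i ^ (m - 1)) :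
    ∏ i ∈ univ.filter (fun i : Fin n => (i : ℕ) < g), sliceSum m n A i ≤ r ^ g := by
  obtain ⟨γ, hγ⟩ := hg.1
  choose σ hσ hσmin using exists_arc_min (exists_out_arc hirr hγ) x
  have hxe : ∀ i, 0 < x i ^ (m - 1) := fun i => pow_pos (hx i) _
  have hrel : ∀ i, sliceSum m n A i * (x i ^ (m - 1))⁻¹ ≤ r * (x (σ i) ^ (m - 1))⁻¹ := by
    intro i
    rw [← div_eq_mul_inv, ← div_eq_mul_inv, div_le_div_iff₀ (hxe i) (hxe (σ i))]
    exact (sliceSum_mul_pow_le_Ax hA (hx _).le (hσmin i)).trans (hsuper i)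
  obtain ⟨S, ⟨γ', hγ'⟩, hS⟩ := exists_circuit_prod_le hσ (sliceSum_nonneg hA)
    (i₀ := γ 0) (fun k => inv_pos.2 (hxe _)) hrel
  rw [prod_const] at hS
  exact Fin.prod_filter_val_lt_le_pow hmono (sliceSum_nonneg hA) (hg.2 ⟨γ', hγ'⟩) hr hS

end Bounds

section Existence

variable {m n : ℕ} {A : Fin n → (Fin (m - 1) → Fin n) → ℝ}

def collatzWielandtSet (m n : ℕ) (A : Fin n → (Fin (m - 1) → Fin n) → ℝ) :
    Set (ℝ × (Fin n → ℝ)) :=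
  {p | 0 ≤ p.1 ∧ p.2 ∈ stdSimplex ℝ (Fin n) ∧ ∀ i, p.1 * p.2 i ^ (m - 1) ≤ Ax m n A p.2 i}

theorem exists_max_pos_of_mem_stdSimplex {x : Fin n → ℝ} (hx : x ∈ stdSimplex ℝ (Fin n)) :
    ∃ j, 0 < x j ∧ ∀ i, x i ≤ x j := by
  have : (univ : Finset (Fin n)).Nonempty := univ_nonempty_iff.2 <| by
    by_contra h
    rw [not_nonempty_iff] at h
    simpa using hx.2
  obtain ⟨j, -, hj⟩ := exists_max_image univ x this
  refine ⟨j, lt_of_not_ge fun h => ?_, fun i => hj i (mem_univ i)⟩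
  have := sum_nonpos fun i (_ : i ∈ univ) => (hj i (mem_univ i)).trans h
  linarith [hx.2]

theorem le_sum_sliceSum (hA : ∀ i t, 0 ≤ A i t) {r : ℝ} {x : Fin n → ℝ}
    (hx : x ∈ stdSimplex ℝ (Fin n)) (hsub : ∀ i, r * x i ^ (m - 1) ≤ Ax m n A x i) :
    r ≤ ∑ i, sliceSum m n A i := by
  obtain ⟨j, hj, hmax⟩ := exists_max_pos_of_mem_stdSimplex hx
  have : r * x j ^ (m - 1) ≤ sliceSum m n A j * x j ^ (m - 1) :=
    (hsub j).trans (Ax_le_sliceSum_mul_pow hA hx.1 fun i _ => hmax i)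
  exact (le_of_mul_le_mul_right this (pow_pos hj _)).trans
    (single_le_sum (fun i _ => sliceSum_nonneg hA i) (mem_univ j))

theorem isCompact_collatzWielandtSet (hA : ∀ i t, 0 ≤ A i t) :
    IsCompact (collatzWielandtSet m n A) := by
  refine (isCompact_Icc.prod (isCompact_stdSimplex ℝ (Fin n))).of_isClosed_subset ?_
    fun p hp => ⟨⟨hp.1, le_sum_sliceSum hA hp.2.1 hp.2.2⟩, hp.2.1⟩
  simp only [collatzWielandtSet, Set.ofPred_and, Set.ofPred_forall]
  exact (isClosed_le continuous_const continuous_fst).inter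
    (((isClosed_stdSimplex ℝ (Fin n)).preimage continuous_snd).inter
      (isClosed_iInter fun i =>
        isClosed_le (by fun_prop) ((continuous_Ax A i).comp continuous_snd)))

theorem smul_mem_collatzWielandtSet {r : ℝ} (hr : 0 ≤ r) {y : Fin n → ℝ} (hy : ∀ i, 0 ≤ y i)
    (hsum : 0 < ∑ i, y i) (hsub : ∀ i, r * y i ^ (m - 1) ≤ Ax m n A y i) :
    (r, (∑ i, y i)⁻¹ • y) ∈ collatzWielandtSet m n A := by
  have hc : 0 ≤ (∑ i, y i)⁻¹ := inv_nonneg.2 hsum.le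
  refine ⟨hr, ⟨fun i => mul_nonneg hc (hy i), ?_⟩, fun i => ?_⟩
  · simp only [Pi.smul_apply, smul_eq_mul, ← mul_sum, inv_mul_cancel₀ hsum.ne']
  · simp only [Ax_smul, Pi.smul_apply, smul_eq_mul, mul_pow, mul_left_comm r]
    exact mul_le_mul_of_nonneg_left (hsub i) (pow_nonneg hc _)

/-- Raise `x` at `i₁` by `ε`: positivity of `B` raises every coordinate of `B x^{m-1}` by a
multiple of `ε^{m-1}`, and the strict inequality at `i₁` survives for small `ε`. -/
theorem exists_mem_collatzWielandtSet_gt {B : Fin n → (Fin (m - 1) → Fin n) → ℝ} (hm : 2 ≤ m)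
    (hB : ∀ i t, 0 < B i t) {r : ℝ} {x : Fin n → ℝ} (hp : (r, x) ∈ collatzWielandtSet m n B)
    {i₁ : Fin n} (hlt : r * x i₁ ^ (m - 1) < Ax m n B x i₁) :
    ∃ p ∈ collatzWielandtSet m n B, r < p.1 := by
  obtain ⟨hr : 0 ≤ r, hx : x ∈ stdSimplex ℝ (Fin n),
    hsub : ∀ i, r * x i ^ (m - 1) ≤ Ax m n B x i⟩ := hp
  have hB0 : ∀ i t, 0 ≤ B i t := fun i t => (hB i t).le
  set c : Fin (m - 1) → Fin n := fun _ => i₁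
  obtain ⟨ia, -, ha⟩ := exists_min_image univ (fun i => B i c) ⟨i₁, mem_univ _⟩
  set a := B ia c
  have hcont : Continuous fun ε : ℝ => (r + a * ε ^ (m - 1)) * (x i₁ + ε) ^ (m - 1) := by
    fun_prop
  have hev : ∀ᶠ ε in nhdsWithin 0 (Set.Ioi 0),
      (r + a * ε ^ (m - 1)) * (x i₁ + ε) ^ (m - 1) < Ax m n B x i₁ :=
    ((hcont.tendsto 0).eventually (gt_mem_nhds (by simpa [zero_pow (by omega : m - 1 ≠ 0)]
      using hlt))).filter_mono nhdsWithin_le_nhds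
  obtain ⟨ε, hε, hε0 : 0 < ε⟩ := (hev.and self_mem_nhdsWithin).exists
  set y := Function.update x i₁ (x i₁ + ε)
  have hxy : ∀ i, x i ≤ y i := by
    intro i
    rcases eq_or_ne i i₁ with rfl | hi
    · simp [y, hε0.le]
    · simp [y, hi]
  have hsuby : ∀ i, (r + a * ε ^ (m - 1)) * y i ^ (m - 1) ≤ Ax m n B y i := by
    intro i
    rcases eq_or_ne i i₁ with rfl | hi
    · simpa [y] using hε.le.trans (Ax_mono hB0 hx.1 hxy i)
    have hgain := mul_sub_le_Ax_sub_Ax hB0 hx.1 hxy i c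
    have hcy : ∏ j, y (c j) = (x i₁ + ε) ^ (m - 1) := by simp [c, y]
    have hcx : ∏ j, x (c j) = x i₁ ^ (m - 1) := by simp [c]
    rw [hcy, hcx] at hgain
    have hpow : a * ε ^ (m - 1) ≤ B i c * ((x i₁ + ε) ^ (m - 1) - x i₁ ^ (m - 1)) :=
      mul_le_mul (ha i (mem_univ i))
        (by linarith [pow_add_pow_le (hx.1 i₁) hε0.le (by omega : m - 1 ≠ 0)])
        (pow_nonneg hε0.le _) (hB0 i c)
    have hxi : a * ε ^ (m - 1) * x i ^ (m - 1) ≤ a * ε ^ (m - 1) :=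
      mul_le_of_le_one_right (mul_nonneg (hB0 ia c) (pow_nonneg hε0.le _))
        (pow_le_one₀ (hx.1 i) (mem_Icc_of_mem_stdSimplex hx i).2)
    have hyi : y i = x i := Function.update_of_ne hi _ _
    rw [hyi]
    linarith [hsub i]
  have hsum : 0 < ∑ i, y i := lt_of_lt_of_le one_pos (hx.2 ▸ sum_le_sum fun i _ => hxy i)
  have hr' : 0 ≤ r + a * ε ^ (m - 1) :=
    add_nonneg hr (mul_nonneg (hB0 ia c) (pow_nonneg hε0.le _))
  exact ⟨_, smul_mem_collatzWielandtSet hr' (fun i => (hx.1 i).trans (hxy i)) hsum hsuby,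
    lt_add_of_pos_right r (mul_pos (hB ia c) (pow_pos hε0 _))⟩

theorem exists_eigenpair_of_pos [Nonempty (Fin n)] (hm : 2 ≤ m)
    {B : Fin n → (Fin (m - 1) → Fin n) → ℝ} (hB : ∀ i t, 0 < B i t) :
    ∃ (r : ℝ) (x : Fin n → ℝ), 0 ≤ r ∧ x ∈ stdSimplex ℝ (Fin n) ∧ (∀ i, 0 < x i) ∧
      ∀ i, Ax m n B x i = r * x i ^ (m - 1) := by
  have hB0 : ∀ i t, 0 ≤ B i t := fun i t => (hB i t).le
  obtain ⟨i₀⟩ := ‹Nonempty (Fin n)›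
  have hne : ((0 : ℝ), Pi.single i₀ 1) ∈ collatzWielandtSet m n B :=
    ⟨le_rfl, single_mem_stdSimplex ℝ i₀,
      fun i => by simpa using Ax_nonneg hB0 (single_mem_stdSimplex ℝ i₀).1 i⟩
  obtain ⟨⟨r, x⟩, hp, hmax⟩ :=
    (isCompact_collatzWielandtSet hB0).exists_isMaxOn ⟨_, hne⟩ continuous_fst.continuousOn
  obtain ⟨hr : 0 ≤ r, hx : x ∈ stdSimplex ℝ (Fin n), hsub⟩ := hp
  have heq : ∀ i, Ax m n B x i = r * x i ^ (m - 1) := by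
    refine fun i => ((hsub i).lt_or_eq.resolve_left fun hlt => ?_).symm
    obtain ⟨p, hp', hgt⟩ := exists_mem_collatzWielandtSet_gt hm hB ⟨hr, hx, hsub⟩ hlt
    exact (isMaxOn_iff.1 hmax p hp').not_gt hgt
  obtain ⟨j, hj, -⟩ := exists_max_pos_of_mem_stdSimplex hx
  refine ⟨r, x, hr, hx, fun i => (hx.1 i).lt_of_ne fun h => ?_, heq⟩
  have := heq i ▸ Ax_pos hB hx.1 hj i
  simp [← h, zero_pow (by omega : m - 1 ≠ 0)] at this

theorem exists_eigenpair_prod_le_pow (hA : ∀ i t, 0 ≤ A i t)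
    (hirr : StronglyConnected (tArc m n A)) (hmono : Monotone (sliceSum m n A)) {g : ℕ}
    (hg : IsLeast {p : ℕ | ∃ γ : ℕ → Fin n, IsCircuit (tArc m n A) p γ} g) :
    ∃ (r : ℝ) (x : Fin n → ℝ), 0 ≤ r ∧ x ∈ stdSimplex ℝ (Fin n) ∧
      (∀ i, Ax m n A x i = r * x i ^ (m - 1)) ∧
      ∏ i ∈ univ.filter (fun i : Fin n => (i : ℕ) < g), sliceSum m n A i ≤ r ^ g := by
  obtain ⟨γ, hγ⟩ := hg.1
  have hm : 2 ≤ m := two_le_of_tArc (hγ.2.2 0 hγ.1)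
  have : Nonempty (Fin n) := ⟨γ 0⟩
  set ε : ℕ → ℝ := fun k => 1 / ((k : ℝ) + 1)
  have hε : ∀ k, 0 < ε k := fun k => by positivity
  choose r x hr hx hxpos heig using fun k =>
    exists_eigenpair_of_pos hm (B := fun i t => A i t + ε k)
      fun i t => add_pos_of_nonneg_of_pos (hA i t) (hε k)
  have hlow : ∀ k, ∏ i ∈ univ.filter (fun i : Fin n => (i : ℕ) < g), sliceSum m n A i ≤ r k ^ g :=
    fun k => prod_bot_le_pow_of_Ax_le_mul_pow hA hirr hmono hg (hxpos k) (hr k) fun i =>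
      (Ax_mono_left (fun i t => le_add_of_nonneg_right (hε k).le) (hx k).1 i).trans_eq (heig k i)
  have hbdd : ∀ k, r k ≤ ∑ i, sliceSum m n (fun i t => A i t + 1) i := by
    refine fun k => le_sum_sliceSum (fun i t => by linarith [hA i t]) (hx k) fun i => ?_
    refine (heig k i).symm.le.trans (Ax_mono_left (fun i t => ?_) (hx k).1 i)
    have : ε k ≤ 1 := div_le_one_of_le₀ (by linarith [k.cast_nonneg (α := ℝ)]) (by positivity)
    linarith
  obtain ⟨⟨rL, xL⟩, hL, φ, hφ, hlim⟩ :=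
    (isCompact_Icc.prod (isCompact_stdSimplex ℝ (Fin n))).tendsto_subseq
      (x := fun k => (r k, x k)) fun k => ⟨⟨hr k, hbdd k⟩, hx k⟩
  have hclosed : IsClosed {p : ℝ × ℝ × (Fin n → ℝ) |
      ∀ i, Ax m n (fun i t => A i t + p.1) p.2.2 i = p.2.1 * p.2.2 i ^ (m - 1)} := by
    simp only [Set.ofPred_forall]
    exact isClosed_iInter fun i => isClosed_eq (by unfold Ax; fun_prop) (by fun_prop)
  have hεlim : Filter.Tendsto (fun k => ε (φ k)) Filter.atTop (nhds 0) :=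
    tendsto_one_div_add_atTop_nhds_zero_nat.comp hφ.tendsto_atTop
  have heigL := hclosed.mem_of_tendsto (hεlim.prodMk_nhds hlim)
    (Filter.Eventually.of_forall fun k => heig (φ k))
  refine ⟨rL, xL, hL.1.1, hL.2, fun i => by simpa using heigL i, ?_⟩
  exact ge_of_tendsto (((continuous_fst.tendsto _).comp hlim).pow g)
    (Filter.Eventually.of_forall fun k => hlow (φ k))

end Existence

section Eigenvalues

variable {m n : ℕ} {A : Fin n → (Fin (m - 1) → Fin n) → ℝ}

theorem isEig_ofReal {r : ℝ} {x : Fin n → ℝ} (hx : x ≠ 0)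
    (heig : ∀ i, Ax m n A x i = r * x i ^ (m - 1)) : IsEig m n A r := by
  refine ⟨fun i => x i, fun h => hx (funext fun i => by simpa using congrFun h i), fun i => ?_⟩
  have h := congrArg (fun z : ℝ => (z : ℂ)) (heig i)
  simpa [Ax] using h

theorem norm_mul_pow_le_Ax_norm (hA : ∀ i t, 0 ≤ A i t) {lam : ℂ} {x : Fin n → ℂ}
    (heq : ∀ i, ∑ t : Fin (m - 1) → Fin n, (A i t : ℂ) * ∏ j, x (t j) = lam * x i ^ (m - 1))
    (i : Fin n) : ‖lam‖ * ‖x i‖ ^ (m - 1) ≤ Ax m n A (fun j => ‖x j‖) i := by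
  rw [← norm_pow, ← norm_mul, ← heq i]
  refine (norm_sum_le _ _).trans_eq (sum_congr rfl fun t _ => ?_)
  rw [norm_mul, norm_prod, Complex.norm_real, Real.norm_of_nonneg (hA i t)]

end Eigenvalues

theorem stmt4_general (m n : ℕ)
    (A : Fin n → (Fin (m - 1) → Fin n) → ℝ) (hA : ∀ i t, 0 ≤ A i t)
    (hirr : StronglyConnected (tArc m n A))
    (hmono : ∀ i j : Fin n, i ≤ j → sliceSum m n A i ≤ sliceSum m n A j)
    (g : ℕ) (hg : IsLeast {p : ℕ | ∃ γ : ℕ → Fin n, IsCircuit (tArc m n A) p γ} g) :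
    (∏ i ∈ Finset.univ.filter (fun i : Fin n => (i : ℕ) < g), sliceSum m n A i) ^ ((g : ℝ)⁻¹)
      ≤ specRad m n A ∧
    specRad m n A ≤
      (∏ i ∈ Finset.univ.filter (fun i : Fin n => n - g ≤ (i : ℕ)), sliceSum m n A i) ^ ((g : ℝ)⁻¹) := by
  obtain ⟨γ, hγ⟩ := hg.1
  have hg0 : (0 : ℝ) < g := Nat.cast_pos.2 hγ.1
  have hK0 := sliceSum_nonneg hA
  have hmono' : Monotone (sliceSum m n A) := fun i j h => hmono i j h
  set ρ := (∏ i ∈ univ.filter (fun i : Fin n => n - g ≤ (i : ℕ)), sliceSum m n A i) ^ (g : ℝ)⁻¹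
  have hub : ∀ lam, IsEig m n A lam → ‖lam‖ ≤ ρ := by
    rintro lam ⟨x, hx, heq⟩
    obtain ⟨i₀, hi₀⟩ := Function.ne_iff.1 hx
    rw [Real.le_rpow_inv_iff_of_pos (norm_nonneg _) (prod_nonneg fun i _ => hK0 i) hg0,
      Real.rpow_natCast]
    exact pow_le_prod_top_of_mul_pow_le_Ax hA hirr hmono' hg (fun i => norm_nonneg (x i))
      (norm_pos_iff.2 hi₀) (norm_nonneg lam) (norm_mul_pow_le_Ax_norm hA heq)
  obtain ⟨r, x, hr, hx, heig, hlow⟩ := exists_eigenpair_prod_le_pow hA hirr hmono' hg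
  have hr_le : r ≤ specRad m n A := by
    refine le_csSup ⟨ρ, ?_⟩ ⟨r, isEig_ofReal (fun h => by simpa [h] using hx.2) heig, ?_⟩
    · rintro _ ⟨lam, hlam, rfl⟩
      exact hub lam hlam
    · rw [Complex.norm_real, Real.norm_of_nonneg hr]
  refine ⟨?_, Real.sSup_le (by rintro _ ⟨lam, hlam, rfl⟩; exact hub lam hlam)
    (Real.rpow_nonneg (prod_nonneg fun i _ => hK0 i) _)⟩
  refine le_trans ?_ hr_le
  rwa [Real.rpow_inv_le_iff_of_pos (prod_nonneg fun i _ => hK0 i) hr hg0, Real.rpow_natCast]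

theorem stmt4 (m n : ℕ) (hm : 2 ≤ m) (hn : 0 < n)
    (A : Fin n → (Fin (m - 1) → Fin n) → ℝ) (hA : ∀ i t, 0 ≤ A i t)
    (hirr : StronglyConnected (tArc m n A))
    (hmono : ∀ i j : Fin n, i ≤ j → sliceSum m n A i ≤ sliceSum m n A j)
    (g : ℕ) (hg : IsLeast {p : ℕ | ∃ γ : ℕ → Fin n, IsCircuit (tArc m n A) p γ} g) :
    (∏ i ∈ Finset.univ.filter (fun i : Fin n => (i : ℕ) < g), sliceSum m n A i) ^ ((g : ℝ)⁻¹)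
      ≤ specRad m n A ∧
    specRad m n A ≤
      (∏ i ∈ Finset.univ.filter (fun i : Fin n => n - g ≤ (i : ℕ)), sliceSum m n A i) ^ ((g : ℝ)⁻¹) :=
  stmt4_general m n A hA hirr hmono g hg
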